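/- arXiv:1507.03144 — 6 statements merged into one kernel-verified Lean document; each statement's English description precedes it below -/
import Mathlib

section
/- For all natural numbers k and ℓ, the sum ∑_{j=0}^{ℓ} C(ℓ,j)/C(k+ℓ,j) equals (k+ℓ+1)/(k+1), where C(n,j) denotes the binomial coefficient. -/
lemma term_eq (k ℓ j : ℕ) (hj : j ≤ ℓ) :
    ((ℓ.choose j : ℚ) / ((k + ℓ).choose j : ℚ))
      = ((k : ℚ) + ℓ + 1) / ((k : ℚ) + 1) *
        ((ℓ.choose j : ℚ) / ((k + ℓ + 1).choose j : ℚ)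
          - (ℓ.choose (j+1) : ℚ) / ((k + ℓ + 1).choose (j+1) : ℚ)) := by
  have hjm : j ≤ k + ℓ := le_trans hj (Nat.le_add_left _ _)
  have h2 : ((k+ℓ+1).choose j : ℚ) ≠ 0 := by
    exact_mod_cast (Nat.choose_pos (hjm.trans (Nat.le_succ _))).ne'
  have hk : ((k:ℚ) + 1) ≠ 0 := by positivity
  have hjq : ((j:ℚ) + 1) ≠ 0 := by positivity
  have hm : ((k:ℚ) + ℓ + 1) ≠ 0 := by positivity
  have hmj : ((k:ℚ) + ℓ + 1 - j) ≠ 0 := by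
    have : (j:ℚ) ≤ ℓ := by exact_mod_cast hj
    nlinarith
  have hsub : ((k+ℓ+1-j : ℕ) : ℚ) = (k:ℚ)+ℓ+1-j := by
    push_cast [Nat.cast_sub (hjm.trans (Nat.le_succ _))]; ring
  have e1 : ((k+ℓ).choose j : ℚ) = ((k+ℓ+1).choose j : ℚ) * ((k:ℚ)+ℓ+1-j) / ((k:ℚ)+ℓ+1) := by
    rw [eq_div_iff hm]
    have h := Nat.choose_mul_succ_eq (k+ℓ) j
    calc ((k+ℓ).choose j : ℚ) * ((k:ℚ)+ℓ+1)
        = (((k+ℓ).choose j * (k+ℓ+1) : ℕ) : ℚ) := by push_cast; ring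
      _ = (((k+ℓ+1).choose j * (k+ℓ+1-j) : ℕ) : ℚ) := by rw [h]
      _ = _ := by push_cast [hsub]; ring
  have e2 : ((k+ℓ+1).choose (j+1) : ℚ) = ((k+ℓ+1).choose j : ℚ) * ((k:ℚ)+ℓ+1-j) / ((j:ℚ)+1) := by
    rw [eq_div_iff hjq]
    have h := Nat.choose_succ_right_eq (k+ℓ+1) j
    calc ((k+ℓ+1).choose (j+1) : ℚ) * ((j:ℚ)+1)
        = (((k+ℓ+1).choose (j+1) * (j+1) : ℕ) : ℚ) := by push_cast; ring
      _ = (((k+ℓ+1).choose j * (k+ℓ+1-j) : ℕ) : ℚ) := by rw [h]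
      _ = _ := by push_cast [hsub]; ring
  have e3 : (ℓ.choose (j+1) : ℚ) = (ℓ.choose j : ℚ) * ((ℓ:ℚ)-j) / ((j:ℚ)+1) := by
    rw [eq_div_iff hjq]
    have h := Nat.choose_succ_right_eq ℓ j
    calc (ℓ.choose (j+1) : ℚ) * ((j:ℚ)+1)
        = ((ℓ.choose (j+1) * (j+1) : ℕ) : ℚ) := by push_cast; ring
      _ = ((ℓ.choose j * (ℓ-j) : ℕ) : ℚ) := by rw [h]
      _ = _ := by push_cast [Nat.cast_sub hj]; ring
  rw [e1, e2, e3]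
  field_simp
  ring

/-- For all natural numbers `k` and `ℓ`,
`∑_{j=0}^{ℓ} C(ℓ,j)/C(k+ℓ,j) = (k+ℓ+1)/(k+1)` in `ℚ`. -/
theorem binomial_sum_identity (k ℓ : ℕ) :
    ∑ j ∈ Finset.range (ℓ + 1),
        ((ℓ.choose j : ℚ) / ((k + ℓ).choose j : ℚ))
      = ((k : ℚ) + ℓ + 1) / ((k : ℚ) + 1) := by
  have key : ∑ j ∈ Finset.range (ℓ + 1),
      ((ℓ.choose j : ℚ) / ((k + ℓ).choose j : ℚ))
      = ((k : ℚ) + ℓ + 1) / ((k : ℚ) + 1) *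
        ∑ j ∈ Finset.range (ℓ + 1),
          ((ℓ.choose j : ℚ) / ((k + ℓ + 1).choose j : ℚ)
            - (ℓ.choose (j+1) : ℚ) / ((k + ℓ + 1).choose (j+1) : ℚ)) := by
    rw [Finset.mul_sum]
    refine Finset.sum_congr rfl fun j hj => ?_
    exact term_eq k ℓ j (Nat.lt_succ_iff.mp (Finset.mem_range.mp hj))
  rw [key, Finset.sum_range_sub' (fun j => (ℓ.choose j : ℚ) / ((k + ℓ + 1).choose j : ℚ))]
  simp [Nat.choose_self, Nat.choose_succ_self]
end

section
/- Define G : ℕ × ℕ → ℚ by G(k,ℓ) = ∑_{j=0}^{ℓ} C(ℓ,j)/C(k+ℓ,j). Then for all k, ℓ ≥ 1, (k+ℓ)·G(k,ℓ) = k·G(k−1,ℓ) + ℓ·G(k,ℓ−1). -/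
/-- `G(k,ℓ) = ∑_{j=0}^{ℓ} C(ℓ,j)/C(k+ℓ,j)` as a rational number. -/
def G (k ℓ : ℕ) : ℚ :=
  ∑ j ∈ Finset.range (ℓ + 1), ((ℓ.choose j : ℚ) / ((k + ℓ).choose j : ℚ))

lemma G_eq (k ℓ : ℕ) : G k ℓ = ((k : ℚ) + ℓ + 1) / ((k : ℚ) + 1) := by
  have hterm : ∀ j ∈ Finset.range (ℓ + 1),
      ((ℓ.choose j : ℚ) / ((k + ℓ).choose j : ℚ)) =
        (((k + ℓ - j).choose k : ℚ) / ((k + ℓ).choose k : ℚ)) := by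
    intro j hj
    rw [Finset.mem_range] at hj
    have hjℓ : j ≤ ℓ := by omega
    rw [Nat.cast_choose ℚ hjℓ, Nat.cast_choose ℚ (show j ≤ k + ℓ by omega),
      Nat.cast_choose ℚ (show k ≤ k + ℓ - j by omega),
      Nat.cast_choose ℚ (show k ≤ k + ℓ by omega)]
    have e1 : k + ℓ - j - k = ℓ - j := by omega
    have e2 : k + ℓ - k = ℓ := by omega
    rw [e1, e2]
    have f0 : (((ℓ - j).factorial : ℚ)) ≠ 0 := Nat.cast_ne_zero.mpr (Nat.factorial_ne_zero _)
    have f1 : ((j.factorial : ℚ)) ≠ 0 := Nat.cast_ne_zero.mpr (Nat.factorial_ne_zero _)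
    have f2 : ((k.factorial : ℚ)) ≠ 0 := Nat.cast_ne_zero.mpr (Nat.factorial_ne_zero _)
    have f3 : ((ℓ.factorial : ℚ)) ≠ 0 := Nat.cast_ne_zero.mpr (Nat.factorial_ne_zero _)
    have f4 : (((k + ℓ).factorial : ℚ)) ≠ 0 := Nat.cast_ne_zero.mpr (Nat.factorial_ne_zero _)
    have f5 : (((k + ℓ - j).factorial : ℚ)) ≠ 0 := Nat.cast_ne_zero.mpr (Nat.factorial_ne_zero _)
    field_simp
  rw [G, Finset.sum_congr rfl hterm, ← Finset.sum_div]
  have hsum : ∑ j ∈ Finset.range (ℓ + 1), (((k + ℓ - j).choose k : ℚ)) =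
      ((ℓ + k + 1).choose (k + 1) : ℚ) := by
    rw [← Finset.sum_range_reflect]
    rw [← Nat.sum_range_add_choose ℓ k]
    push_cast
    refine Finset.sum_congr rfl ?_
    intro j hj
    rw [Finset.mem_range] at hj
    congr 2
    omega
  rw [hsum]
  have hkey : ((ℓ + k + 1).choose (k + 1) : ℚ) * ((k : ℚ) + 1) =
      ((k : ℚ) + ℓ + 1) * (((k + ℓ).choose k : ℚ)) := by
    have := Nat.add_one_mul_choose_eq (k + ℓ) k
    have h2 : (k + ℓ).succ * (k + ℓ).choose k = (ℓ + k + 1).choose (k + 1) * (k + 1) := by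
      rw [this]; congr 2; omega
    have := congrArg (fun n : ℕ => (n : ℚ)) h2
    push_cast at this
    linarith
  have hc : (((k + ℓ).choose k : ℚ)) ≠ 0 :=
    Nat.cast_ne_zero.mpr (Nat.choose_pos (by omega : k ≤ k + ℓ)).ne'
  have hk1 : ((k : ℚ) + 1) ≠ 0 := by positivity
  field_simp
  linarith [hkey]

/-- For all `k, ℓ ≥ 1`, `(k+ℓ)·G(k,ℓ) = k·G(k−1,ℓ) + ℓ·G(k,ℓ−1)`. -/
theorem G_recursion (k ℓ : ℕ) (hk : 1 ≤ k) (hℓ : 1 ≤ ℓ) :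
    ((k : ℚ) + ℓ) * G k ℓ = (k : ℚ) * G (k - 1) ℓ + (ℓ : ℚ) * G k (ℓ - 1) := by
  rw [G_eq, G_eq, G_eq]
  have h1 : ((k - 1 : ℕ) : ℚ) = (k : ℚ) - 1 := by
    have : (k : ℚ) ≥ 1 := by exact_mod_cast hk
    push_cast [Nat.cast_sub hk]; ring
  have h2 : ((ℓ - 1 : ℕ) : ℚ) = (ℓ : ℚ) - 1 := by
    push_cast [Nat.cast_sub hℓ]; ring
  rw [h1, h2]
  have hk0 : (k : ℚ) ≠ 0 := by
    have : (1 : ℚ) ≤ k := by exact_mod_cast hk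
    linarith
  have hk1 : ((k : ℚ) - 1) + 1 ≠ 0 := by rw [sub_add_cancel]; exact hk0
  have hk2 : (k : ℚ) + 1 ≠ 0 := by positivity
  field_simp
  ring
end

section
/- Let D = ∂/∂x + ∂/∂y act on ℚ[x,y]. For all natural numbers k, ℓ and all j with 0 ≤ j ≤ k+ℓ, the monomial x^{k+ℓ} is congruent to (−1)^j·C(k+ℓ,j)·x^{k+ℓ−j} y^j modulo the image of D. -/
open MvPolynomial
/-- The variable `x` in `ℚ[x,y]`. -/
noncomputable def x : MvPolynomial (Fin 2) ℚ := X 0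
/-- The variable `y` in `ℚ[x,y]`. -/
noncomputable def y : MvPolynomial (Fin 2) ℚ := X 1
/-- The derivation `D = ∂/∂x + ∂/∂y` of `ℚ[x,y]`, as a linear map. -/
noncomputable def D : MvPolynomial (Fin 2) ℚ →ₗ[ℚ] MvPolynomial (Fin 2) ℚ :=
  (pderiv 0).toLinearMap + (pderiv 1).toLinearMap

lemma D_mono (c : ℚ) (a b : ℕ) : D (C c * x^a * y^b) =
    C (c * a) * x^(a-1) * y^b + C (c * b) * x^a * y^(b-1) := by
  simp [D, x, y, pderiv_X, Derivation.leibniz, Derivation.leibniz_pow, Pi.single_apply]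
  ring

/-- For all `k, ℓ` and `0 ≤ j ≤ k+ℓ`, the monomial `x^{k+ℓ}` is congruent to
`(−1)^j·C(k+ℓ,j)·x^{k+ℓ−j} y^j` modulo the image of `D = ∂/∂x + ∂/∂y`. -/
theorem xpow_congr_mod_image_D (k ℓ j : ℕ) (hj : j ≤ k + ℓ) :
    x ^ (k + ℓ) - C ((-1 : ℚ) ^ j * ((k + ℓ).choose j : ℚ)) * x ^ (k + ℓ - j) * y ^ j
      ∈ LinearMap.range D := by
  induction j with
  | zero => simp
  | succ j ih =>
    have hj' : j ≤ k + ℓ := Nat.le_of_succ_le hj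
    set n := k + ℓ
    set c : ℚ := (-1 : ℚ) ^ j * (n.choose j : ℚ) / (j + 1) with hc
    have h1 := D_mono c (n - j) (j + 1)
    have hc1 : c * ((j + 1 : ℕ) : ℚ) = (-1 : ℚ) ^ j * (n.choose j : ℚ) := by
      rw [hc]; push_cast; field_simp
    have hc2 : c * ((n - j : ℕ) : ℚ) = -((-1 : ℚ) ^ (j+1) * (n.choose (j+1) : ℚ)) := by
      have hch : (n.choose (j+1) : ℚ) * (j + 1) = (n.choose j : ℚ) * ((n - j : ℕ) : ℚ) := by
        exact_mod_cast congrArg (Nat.cast : ℕ → ℚ) (Nat.choose_succ_right_eq n j)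
      have hjq : ((j:ℚ) + 1) ≠ 0 := by positivity
      rw [Nat.cast_sub hj'] at hch ⊢
      rw [hc, div_mul_eq_mul_div, div_eq_iff hjq]
      linear_combination (-(-1:ℚ)^j) * hch
    rw [hc1, hc2] at h1
    have h2 : x ^ n - C ((-1 : ℚ) ^ (j+1) * (n.choose (j+1) : ℚ)) * x ^ (n - (j+1)) * y ^ (j+1)
        = (x ^ n - C ((-1 : ℚ) ^ j * (n.choose j : ℚ)) * x ^ (n - j) * y ^ j)
          + D (C c * x ^ (n - j) * y ^ (j+1)) := by
      rw [h1, Nat.sub_sub, map_neg]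
      simp only [Nat.add_sub_cancel]
      ring
    rw [h2]
    exact Submodule.add_mem _ (ih hj') ⟨_, rfl⟩
end

section
/- Let D = ∂/∂x + ∂/∂y act on ℚ[x,y]. For all natural numbers k and ℓ, the polynomial (x−y)^ℓ · x^k is congruent to ((k+ℓ+1)/(k+1))·x^{k+ℓ} modulo the image of D. -/
open MvPolynomial

/-- For all natural numbers `k` and `ℓ`, the polynomial `(x−y)^ℓ·x^k` is congruent to
`((k+ℓ+1)/(k+1))·x^{k+ℓ}` modulo the image of `D = ∂/∂x + ∂/∂y`. -/
theorem sub_pow_mul_congr_mod_image_D (k ℓ : ℕ) :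
    (x - y) ^ ℓ * x ^ k - C (((k : ℚ) + ℓ + 1) / ((k : ℚ) + 1)) * x ^ (k + ℓ)
      ∈ LinearMap.range D := by
  have hk : ((k : ℚ) + 1) ≠ 0 := by positivity
  refine ⟨C (((k : ℚ) + 1)⁻¹) * ((x - y) ^ ℓ * x ^ (k + 1) - x ^ (k + ℓ + 1)), ?_⟩
  have e1 : (C (((k : ℚ) + 1)⁻¹) : MvPolynomial (Fin 2) ℚ) * ((k : MvPolynomial (Fin 2) ℚ) + 1)
      = 1 := by
    rw [show ((k : MvPolynomial (Fin 2) ℚ) + 1) = C ((k : ℚ) + 1) by simp,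
      ← C_mul, inv_mul_cancel₀ hk, C_1]
  have e2 : (C (((k : ℚ) + ℓ + 1) / ((k : ℚ) + 1)) : MvPolynomial (Fin 2) ℚ)
      = C (((k : ℚ) + 1)⁻¹) * ((k : MvPolynomial (Fin 2) ℚ) + (ℓ : MvPolynomial (Fin 2) ℚ) + 1) := by
    rw [show ((k : MvPolynomial (Fin 2) ℚ) + (ℓ : MvPolynomial (Fin 2) ℚ) + 1)
        = C ((k : ℚ) + ℓ + 1) by simp,
      ← C_mul, div_eq_inv_mul]
  simp only [D, x, y, LinearMap.add_apply, Derivation.coeFn_coe, pderiv_mul, pderiv_pow,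
    pderiv_X, pderiv_C, Pi.single_apply]
  norm_num
  linear_combination e1 * ((X 0 - X 1 : MvPolynomial (Fin 2) ℚ) ^ ℓ * X 0 ^ k) + e2 * X 0 ^ (k + ℓ)
end

section
/- Let C be a coalgebra over a field F and M an F-vector space. Suppose ψ : A → B is an injective homomorphism of right C-comodules and φ_A : A → M ⊗ C is a comodule homomorphism. Then there exists a comodule homomorphism φ_B : B → M ⊗ C with φ_B ∘ ψ = φ_A. -/
open TensorProduct

section

variable (F : Type*) [Field F]
variable (C : Type*) [AddCommGroup C] [Module F C] [Coalgebra F C]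
variable (M : Type*) [AddCommGroup M] [Module F M]
variable (A B : Type*) [AddCommGroup A] [Module F A] [AddCommGroup B] [Module F B]

/-- The right `C`-comodule structure `id_M ⊗ Δ` on `M ⊗ C` (composed with the
associator `M ⊗ (C ⊗ C) ≅ (M ⊗ C) ⊗ C`). -/
noncomputable def cofreeCoaction : M ⊗[F] C →ₗ[F] (M ⊗[F] C) ⊗[F] C :=
  (TensorProduct.assoc F M C C).symm.toLinearMap ∘ₗ
    LinearMap.lTensor M (Coalgebra.comul (R := F) (A := C))

/-- Any map of the form `(r ⊗ id_C) ∘ ρ` for a coaction `ρ` is a comodule map to `M ⊗ C`. -/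
theorem cofree_extend_is_comodule_map
    (ρB : B →ₗ[F] B ⊗[F] C)
    (hcoassocB : (LinearMap.lTensor B (Coalgebra.comul (R := F) (A := C))) ∘ₗ ρB =
        (TensorProduct.assoc F B C C).toLinearMap ∘ₗ (LinearMap.rTensor C ρB) ∘ₗ ρB)
    (r : B →ₗ[F] M) :
    (cofreeCoaction F C M) ∘ₗ ((LinearMap.rTensor C r) ∘ₗ ρB) =
      (LinearMap.rTensor C ((LinearMap.rTensor C r) ∘ₗ ρB)) ∘ₗ ρB := by
  have h1 : LinearMap.lTensor M (Coalgebra.comul (R := F) (A := C)) ∘ₗ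
      LinearMap.rTensor C r =
      LinearMap.rTensor (C ⊗[F] C) r ∘ₗ
        LinearMap.lTensor B (Coalgebra.comul (R := F) (A := C)) := by
    rw [LinearMap.lTensor_comp_rTensor, LinearMap.rTensor_comp_lTensor]
  have h2 : TensorProduct.map r (TensorProduct.map LinearMap.id LinearMap.id) ∘ₗ
      (TensorProduct.assoc F B C C).toLinearMap =
      (TensorProduct.assoc F M C C).toLinearMap ∘ₗ
        TensorProduct.map (TensorProduct.map r LinearMap.id) LinearMap.id :=
    TensorProduct.map_map_comp_assoc_eq r LinearMap.id LinearMap.id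
  rw [TensorProduct.map_id] at h2
  unfold cofreeCoaction
  rw [LinearMap.comp_assoc, ← LinearMap.comp_assoc _ _
    (LinearMap.lTensor M (Coalgebra.comul (R := F) (A := C))), h1,
    LinearMap.comp_assoc, hcoassocB]
  -- Now: assoc⁻¹ ∘ (rTensor r ∘ (assoc ∘ (rTensor ρB ∘ ρB))) = ...
  have h3 : LinearMap.rTensor (C ⊗[F] C) r ∘ₗ (TensorProduct.assoc F B C C).toLinearMap =
      (TensorProduct.assoc F M C C).toLinearMap ∘ₗ
        LinearMap.rTensor C (LinearMap.rTensor C r) := by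
    simpa only [LinearMap.rTensor] using h2
  rw [← LinearMap.comp_assoc (LinearMap.rTensor C ρB ∘ₗ ρB)
    (TensorProduct.assoc F B C C).toLinearMap (LinearMap.rTensor (C ⊗[F] C) r), h3]
  ext b
  simp [LinearMap.rTensor_comp, LinearMap.comp_apply]

/-- `M ⊗ C` is an injective comodule: any comodule homomorphism `φ_A : A → M ⊗ C` extends
along any injective homomorphism of right `C`-comodules `ψ : A → B`. -/
theorem cofree_comodule_injective
    (ρA : A →ₗ[F] A ⊗[F] C) (ρB : B →ₗ[F] B ⊗[F] C)
    -- comodule axioms for `A`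
    (hcounitA : (TensorProduct.rid F A).toLinearMap ∘ₗ
        (LinearMap.lTensor A (Coalgebra.counit (R := F) (A := C))) ∘ₗ ρA = LinearMap.id)
    (hcoassocA : (LinearMap.lTensor A (Coalgebra.comul (R := F) (A := C))) ∘ₗ ρA =
        (TensorProduct.assoc F A C C).toLinearMap ∘ₗ (LinearMap.rTensor C ρA) ∘ₗ ρA)
    -- comodule axioms for `B`
    (hcounitB : (TensorProduct.rid F B).toLinearMap ∘ₗ
        (LinearMap.lTensor B (Coalgebra.counit (R := F) (A := C))) ∘ₗ ρB = LinearMap.id)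
    (hcoassocB : (LinearMap.lTensor B (Coalgebra.comul (R := F) (A := C))) ∘ₗ ρB =
        (TensorProduct.assoc F B C C).toLinearMap ∘ₗ (LinearMap.rTensor C ρB) ∘ₗ ρB)
    -- `ψ : A → B` is an injective homomorphism of right `C`-comodules
    (ψ : A →ₗ[F] B) (hψinj : Function.Injective ψ)
    (hψ : ρB ∘ₗ ψ = (LinearMap.rTensor C ψ) ∘ₗ ρA)
    -- `φA : A → M ⊗ C` is a comodule homomorphism
    (φA : A →ₗ[F] M ⊗[F] C)
    (hφA : (cofreeCoaction F C M) ∘ₗ φA = (LinearMap.rTensor C φA) ∘ₗ ρA) :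
    ∃ φB : B →ₗ[F] M ⊗[F] C,
      (cofreeCoaction F C M) ∘ₗ φB = (LinearMap.rTensor C φB) ∘ₗ ρB ∧
        φB ∘ₗ ψ = φA := by
  classical
  obtain ⟨g, hg⟩ := ψ.exists_leftInverse_of_injective (LinearMap.ker_eq_bot.mpr hψinj)
  set rA : A →ₗ[F] M := (TensorProduct.rid F M).toLinearMap ∘ₗ
    LinearMap.lTensor M (Coalgebra.counit (R := F) (A := C)) ∘ₗ φA with hrA
  set rB : B →ₗ[F] M := rA ∘ₗ g with hrB
  refine ⟨(LinearMap.rTensor C rB) ∘ₗ ρB,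
    cofree_extend_is_comodule_map F C M B ρB hcoassocB rB, ?_⟩
  have hrBψ : rB ∘ₗ ψ = rA := by
    rw [hrB, LinearMap.comp_assoc, hg, LinearMap.comp_id]
  -- φB ∘ ψ = rTensor rB ∘ ρB ∘ ψ = rTensor rB ∘ rTensor ψ ∘ ρA = rTensor rA ∘ ρA
  have key : (LinearMap.rTensor C rB ∘ₗ ρB) ∘ₗ ψ = LinearMap.rTensor C rA ∘ₗ ρA := by
    rw [LinearMap.comp_assoc, hψ, ← LinearMap.comp_assoc, ← LinearMap.rTensor_comp, hrBψ]
  rw [key]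
  -- Now show rTensor rA ∘ ρA = φA using hφA and the counit axiom.
  rw [hrA, LinearMap.rTensor_comp, LinearMap.rTensor_comp, LinearMap.comp_assoc,
    LinearMap.comp_assoc, ← hφA, ← LinearMap.comp_assoc _ _
      (LinearMap.rTensor C (LinearMap.lTensor M (Coalgebra.counit (R := F) (A := C))))]
  have h4 : LinearMap.rTensor C (LinearMap.lTensor M (Coalgebra.counit (R := F) (A := C))) ∘ₗ
      cofreeCoaction F C M =
      (TensorProduct.assoc F M F C).symm.toLinearMap ∘ₗ
        LinearMap.lTensor M (LinearMap.rTensor C (Coalgebra.counit (R := F) (A := C)) ∘ₗ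
          Coalgebra.comul) := by
    unfold cofreeCoaction
    rw [LinearMap.lTensor_comp, ← LinearMap.comp_assoc,
      ← LinearMap.comp_assoc]
    congr 1
    have := TensorProduct.map_map_comp_assoc_symm_eq (R := F)
      (LinearMap.id (M := M)) (Coalgebra.counit (R := F) (A := C)) (LinearMap.id (M := C))
    simpa only [LinearMap.rTensor, LinearMap.lTensor] using this
  rw [h4, Coalgebra.rTensor_counit_comp_comul]
  have h5 : LinearMap.rTensor C (TensorProduct.rid F M).toLinearMap ∘ₗ
      (TensorProduct.assoc F M F C).symm.toLinearMap ∘ₗ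
      LinearMap.lTensor M ((TensorProduct.mk F F C) 1) = LinearMap.id := by
    ext m c; simp
  ext a
  exact DFunLike.congr_fun h5 (φA a)

end
end

section
/- Let A•, B•, C• be cochain complexes of modules over a commutative ring R, equipped with a chain product ∪ : A^p ⊗ B^q → C^{p+q} satisfying the Leibniz rule d(a∪b) = da∪b + (−1)^p a∪db. Let A•_D, B•_D, C•_D denote the associated Deligne cone complexes (triples (w,z,c) as above, built from chosen subcomplexes preserved by ∪). For each t ∈ R define ∪_t on cone elements by (w',z',c') ∪_t (w'',z'',c'') = (w'∪w'', z'∪z'', (1−t)c_0 + t c_1) where c_0 = c'∪z'' + (−1)^{|w'|} w'∪c'' and c_1 = c'∪w'' + (−1)^{|z'|} z'∪c''. Then ∪_t commutes with the cone differentials, i.e., δ(x ∪_t y) = (δx) ∪_t y + (−1)^{|x|} x ∪_t (δy). -/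
universe u

/-- Transport an element of a `ℕ`-indexed family along an equality of indices. -/
def fcast {X : ℕ → Type u} {m n : ℕ} (h : m = n) (x : X m) : X n := h ▸ x


section Aux

theorem fcast_trans {X : ℕ → Type u} {a b c : ℕ} (h : a = b) (h' : b = c) (x : X a) :
    fcast h' (fcast h x) = fcast (h.trans h') x := by subst h; subst h'; rfl

@[simp] theorem fcast_rfl {X : ℕ → Type u} {a : ℕ} (h : a = a) (x : X a) :
    fcast h x = x := rfl

variable {R : Type} [CommRing R]

theorem fcast_add {X : ℕ → Type u} [∀ n, AddCommGroup (X n)] {m n : ℕ} (h : m = n)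
    (x y : X m) : fcast (X := X) h (x + y) = fcast h x + fcast h y := by subst h; rfl

theorem fcast_neg {X : ℕ → Type u} [∀ n, AddCommGroup (X n)] {m n : ℕ} (h : m = n)
    (x : X m) : fcast (X := X) h (-x) = -fcast h x := by subst h; rfl

theorem fcast_sub {X : ℕ → Type u} [∀ n, AddCommGroup (X n)] {m n : ℕ} (h : m = n)
    (x y : X m) : fcast (X := X) h (x - y) = fcast h x - fcast h y := by subst h; rfl

theorem fcast_smul {X : ℕ → Type u} [∀ n, AddCommGroup (X n)] [∀ n, Module R (X n)]
    {m n : ℕ} (h : m = n) (r : R) (x : X m) :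
    fcast (X := X) h (r • x) = r • fcast h x := by subst h; rfl

theorem fcast_coe {X : ℕ → Type u} [∀ n, AddCommGroup (X n)] [∀ n, Module R (X n)]
    (P : ∀ n, Submodule R (X n)) {m n : ℕ} (h : m = n) (x : ↥(P m)) :
    ((fcast (X := fun k => ↥(P k)) h x : ↥(P n)) : X n) = fcast (X := X) h (x : X m) := by
  subst h; rfl

theorem fcast_d {X : ℕ → Type u} [∀ n, AddCommGroup (X n)] [∀ n, Module R (X n)]
    (dX : ∀ n, X n →ₗ[R] X (n + 1)) {m n : ℕ} (h : m = n) (x : X m) :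
    dX n (fcast (X := X) h x) = fcast (X := X) (by rw [h]) (dX m x) := by subst h; rfl

end Aux

section

variable {R : Type} [CommRing R]

variable (A : ℕ → Type u) [∀ n, AddCommGroup (A n)] [∀ n, Module R (A n)]
variable (B : ℕ → Type u) [∀ n, AddCommGroup (B n)] [∀ n, Module R (B n)]
variable (Cc : ℕ → Type u) [∀ n, AddCommGroup (Cc n)] [∀ n, Module R (Cc n)]

variable (PA QA : ∀ n, Submodule R (A n))
variable (PB QB : ∀ n, Submodule R (B n))
variable (PC QC : ∀ n, Submodule R (Cc n))

/-- The degree-`(n+1)` part of the Deligne cone of `A` with chosen subcomplexes `P`, `Q`: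
triples `(w, z, c)` with `w ∈ P^{n+1}`, `z ∈ Q^{n+1}`, `c ∈ A^n`. -/
abbrev Cone (X : ℕ → Type u) [∀ n, AddCommGroup (X n)] [∀ n, Module R (X n)]
    (P Q : ∀ n, Submodule R (X n)) (n : ℕ) : Type u :=
  ↥(P (n + 1)) × ↥(Q (n + 1)) × X n

/-- The cone differential `δ(w,z,c) = (dw, dz, −dc + w − z)`. -/
def coneD (X : ℕ → Type u) [∀ n, AddCommGroup (X n)] [∀ n, Module R (X n)]
    (P Q : ∀ n, Submodule R (X n)) (dX : ∀ n, X n →ₗ[R] X (n + 1))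
    (hPX : ∀ n, ∀ x ∈ P n, dX n x ∈ P (n + 1))
    (hQX : ∀ n, ∀ x ∈ Q n, dX n x ∈ Q (n + 1))
    (n : ℕ) (x : Cone X P Q n) : Cone X P Q (n + 1) :=
  (⟨dX (n + 1) x.1, hPX (n + 1) _ x.1.2⟩,
   ⟨dX (n + 1) x.2.1, hQX (n + 1) _ x.2.1.2⟩,
   -(dX n x.2.2) + (x.1 : X (n + 1)) - (x.2.1 : X (n + 1)))

variable (cup : ∀ p q, A p → B q → Cc (p + q))
variable (hcupP : ∀ p q x y, x ∈ PA p → y ∈ PB q → cup p q x y ∈ PC (p + q))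
variable (hcupQ : ∀ p q x y, x ∈ QA p → y ∈ QB q → cup p q x y ∈ QC (p + q))

/-- Beilinson's product `∪_t` on Deligne cones.  Here `x` has degree `p+1` (its data is
`(w', z', c')` with `w' ∈ P_A^{p+1}`, `c' ∈ A^p`), `y` has degree `q+1`, and
`x ∪_t y = (w'∪w'', z'∪z'', (1−t)c₀ + t c₁)` with
`c₀ = c'∪z'' + (−1)^{|w'|} w'∪c''` and `c₁ = c'∪w'' + (−1)^{|z'|} z'∪c''`. -/
def cupT (t : R) (p q : ℕ) (x : Cone A PA QA p) (y : Cone B PB QB q) :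
    Cone Cc PC QC (p + q + 1) :=
  (fcast (X := fun n => ↥(PC n)) (by omega : (p + 1) + (q + 1) = (p + q + 1) + 1)
      ⟨cup (p + 1) (q + 1) x.1 y.1, hcupP _ _ _ _ x.1.2 y.1.2⟩,
   fcast (X := fun n => ↥(QC n)) (by omega : (p + 1) + (q + 1) = (p + q + 1) + 1)
      ⟨cup (p + 1) (q + 1) x.2.1 y.2.1, hcupQ _ _ _ _ x.2.1.2 y.2.1.2⟩,
   (1 - t) • (fcast (X := Cc) (by omega : p + (q + 1) = p + q + 1) (cup p (q + 1) x.2.2 y.2.1) +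
        ((-1 : R) ^ (p + 1)) •
          fcast (X := Cc) (by omega : (p + 1) + q = p + q + 1) (cup (p + 1) q x.1 y.2.2)) +
     t • (fcast (X := Cc) (by omega : p + (q + 1) = p + q + 1) (cup p (q + 1) x.2.2 y.1) +
        ((-1 : R) ^ (p + 1)) •
          fcast (X := Cc) (by omega : (p + 1) + q = p + q + 1) (cup (p + 1) q x.2.1 y.2.2)))


theorem fcast_cone (X : ℕ → Type u) [∀ n, AddCommGroup (X n)] [∀ n, Module R (X n)]
    (P Q : ∀ n, Submodule R (X n)) {m n : ℕ} (h : m = n) (x : Cone X P Q m) :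
    fcast (X := fun k => Cone X P Q k) h x =
      (fcast (X := fun k => ↥(P k)) (by rw [h]) x.1,
       fcast (X := fun k => ↥(Q k)) (by rw [h]) x.2.1,
       fcast (X := X) h x.2.2) := by subst h; rfl

theorem cup_fcast_l {p p' q : ℕ} (h : p = p') (a : A p) (b : B q) :
    cup p' q (fcast (X := A) h a) b =
      fcast (X := Cc) (by rw [h]) (cup p q a b) := by subst h; rfl

theorem cup_fcast_r {p q q' : ℕ} (h : q = q') (a : A p) (b : B q) :
    cup p q' a (fcast (X := B) h b) =
      fcast (X := Cc) (by rw [h]) (cup p q a b) := by subst h; rfl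


/-- Beilinson's products `∪_t` on Deligne cone complexes satisfy the Leibniz rule
`δ(x ∪_t y) = (δx) ∪_t y + (−1)^{|x|} x ∪_t (δy)`. -/
theorem cupT_leibniz
    (dA : ∀ n, A n →ₗ[R] A (n + 1)) (dB : ∀ n, B n →ₗ[R] B (n + 1))
    (dC : ∀ n, Cc n →ₗ[R] Cc (n + 1))
    (hddA : ∀ n x, dA (n + 1) (dA n x) = 0)
    (hddB : ∀ n x, dB (n + 1) (dB n x) = 0)
    (hddC : ∀ n x, dC (n + 1) (dC n x) = 0)
    (hPA' : ∀ n, ∀ x ∈ PA n, dA n x ∈ PA (n + 1))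
    (hQA' : ∀ n, ∀ x ∈ QA n, dA n x ∈ QA (n + 1))
    (hPB' : ∀ n, ∀ x ∈ PB n, dB n x ∈ PB (n + 1))
    (hQB' : ∀ n, ∀ x ∈ QB n, dB n x ∈ QB (n + 1))
    (hPC' : ∀ n, ∀ x ∈ PC n, dC n x ∈ PC (n + 1))
    (hQC' : ∀ n, ∀ x ∈ QC n, dC n x ∈ QC (n + 1))
    -- `∪` is bilinear
    (haddl : ∀ p q a a' b, cup p q (a + a') b = cup p q a b + cup p q a' b)
    (haddr : ∀ p q a b b', cup p q a (b + b') = cup p q a b + cup p q a b')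
    (hsmull : ∀ p q (r : R) a b, cup p q (r • a) b = r • cup p q a b)
    (hsmulr : ∀ p q (r : R) a b, cup p q a (r • b) = r • cup p q a b)
    -- `∪` satisfies the Leibniz rule `d(a∪b) = da∪b + (−1)^p a∪db`
    (hLeib : ∀ p q (a : A p) (b : B q),
      dC (p + q) (cup p q a b) =
        fcast (X := Cc) (by omega : (p + 1) + q = p + q + 1) (cup (p + 1) q (dA p a) b) +
          ((-1 : R) ^ p) •
            fcast (X := Cc) (by omega : p + (q + 1) = p + q + 1) (cup p (q + 1) a (dB q b)))
    (t : R) (p q : ℕ) (x : Cone A PA QA p) (y : Cone B PB QB q) :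
    coneD Cc PC QC dC hPC' hQC' (p + q + 1)
        (cupT A B Cc PA QA PB QB PC QC cup hcupP hcupQ t p q x y) =
      fcast (X := fun n => Cone Cc PC QC n)
          (by omega : ((p + 1) + q + 1) = (p + q + 1) + 1)
          (cupT A B Cc PA QA PB QB PC QC cup hcupP hcupQ t (p + 1) q
            (coneD A PA QA dA hPA' hQA' p x) y) +
        ((-1 : R) ^ (p + 1)) •
          fcast (X := fun n => Cone Cc PC QC n)
            (by omega : (p + (q + 1) + 1) = (p + q + 1) + 1)
            (cupT A B Cc PA QA PB QB PC QC cup hcupP hcupQ t p (q + 1) x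
              (coneD B PB QB dB hPB' hQB' q y)) := by
  have hnegl : ∀ p q (a : A p) (b : B q), cup p q (-a) b = -(cup p q a b) := by
    intro p q a b; rw [← neg_one_smul R a, hsmull, neg_one_smul]
  have hnegr : ∀ p q (a : A p) (b : B q), cup p q a (-b) = -(cup p q a b) := by
    intro p q a b; rw [← neg_one_smul R b, hsmulr, neg_one_smul]
  have hsubl : ∀ p q (a a' : A p) (b : B q),
      cup p q (a - a') b = cup p q a b - cup p q a' b := by
    intro p q a a' b; rw [sub_eq_add_neg, haddl, hnegl, sub_eq_add_neg]
  have hsubr : ∀ p q (a : A p) (b b' : B q),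
      cup p q a (b - b') = cup p q a b - cup p q a b' := by
    intro p q a b b'; rw [sub_eq_add_neg, haddr, hnegr, sub_eq_add_neg]
  have hLeib' : ∀ p q (a : A p) (b : B (q + 1)),
      dC (p + q + 1) (cup p (q + 1) a b) =
        fcast (X := Cc) (by omega : (p + 1) + (q + 1) = p + q + 1 + 1)
            (cup (p + 1) (q + 1) (dA p a) b) +
          ((-1 : R) ^ p) •
            fcast (X := Cc) (by omega : p + (q + 1 + 1) = p + q + 1 + 1)
              (cup p (q + 1 + 1) a (dB (q + 1) b)) :=
    fun p q a b => hLeib p (q + 1) a b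
  refine Prod.ext ?_ (Prod.ext ?_ ?_)
  · apply Subtype.ext
    simp only [coneD, cupT, fcast_cone, fcast_coe, fcast_d, cup_fcast_l, cup_fcast_r,
      fcast_trans, fcast_add, fcast_smul, fcast_neg, fcast_sub, hLeib, hLeib', map_add, map_smul,
      map_neg, map_sub, haddl, haddr, hsmull, hsmulr, hnegl, hnegr, hsubl, hsubr,
      Prod.fst_add, Prod.snd_add, Prod.smul_fst, Prod.smul_snd,
      Submodule.coe_add, SetLike.val_smul, Submodule.coe_smul, Submodule.coe_smul_of_tower, fcast_rfl]
  · apply Subtype.ext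
    simp only [coneD, cupT, fcast_cone, fcast_coe, fcast_d, cup_fcast_l, cup_fcast_r,
      fcast_trans, fcast_add, fcast_smul, fcast_neg, fcast_sub, hLeib, hLeib', map_add, map_smul,
      map_neg, map_sub, haddl, haddr, hsmull, hsmulr, hnegl, hnegr, hsubl, hsubr,
      Prod.fst_add, Prod.snd_add, Prod.smul_fst, Prod.smul_snd,
      Submodule.coe_add, SetLike.val_smul, Submodule.coe_smul, Submodule.coe_smul_of_tower, fcast_rfl]
  · simp only [coneD, cupT, fcast_cone, fcast_coe, fcast_d, cup_fcast_l, cup_fcast_r,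
      fcast_trans, fcast_add, fcast_smul, fcast_neg, fcast_sub, hLeib, hLeib', map_add, map_smul,
      map_neg, map_sub, haddl, haddr, hsmull, hsmulr, hnegl, hnegr, hsubl, hsubr,
      Prod.fst_add, Prod.snd_add, Prod.smul_fst, Prod.smul_snd,
      Submodule.coe_add, SetLike.val_smul, Submodule.coe_smul, Submodule.coe_smul_of_tower, fcast_rfl]
    rcases Nat.even_or_odd p with hp | hp
    · have h0 : ((-1 : R)) ^ p = 1 := hp.neg_one_pow
      have h1 : ((-1 : R)) ^ (p + 1) = -1 := (hp.add_one).neg_one_pow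
      have h2 : ((-1 : R)) ^ (p + 1 + 1) = 1 := ((hp.add_one).add_one).neg_one_pow
      simp only [h0, h1, h2, one_smul, neg_smul, neg_neg]
      module
    · have h0 : ((-1 : R)) ^ p = -1 := hp.neg_one_pow
      have h1 : ((-1 : R)) ^ (p + 1) = 1 := (hp.add_one).neg_one_pow
      have h2 : ((-1 : R)) ^ (p + 1 + 1) = -1 := ((hp.add_one).add_one).neg_one_pow
      simp only [h0, h1, h2, one_smul, neg_smul, neg_neg]
      module


end
end
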